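/- Let d ≥ 1, n ≥ 1, and 0 < Δ < 1/4 with (4Δ)^d < 1, and let G ∼ G(X_n; l) be a random geometric graph in [0,1]^d with radius l = √(d − 1 + (1 − 4Δ)²). Then P{G is a complete graph} ≥ (1 − (4Δ)^d)^n. -/

import Mathlib

/-! Call a point of `[0,1]^d` central if one of its coordinates lies in `[2Δ, 1 - 2Δ]`.
Each coordinate difference of two points of the cube is at most `1` in absolute value, and
central coordinates leave enough slack in the sum of squares: if two points are central in the
same coordinate, that difference is at most `1 - 4Δ`; if in different coordinates, those two
differences are at most `1 - 2Δ`, and `2 (1 - 2Δ)² ≤ 1 + (1 - 4Δ)²`. Hence the graph is complete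
as soon as all points are central, and by independence this happens with probability
`(1 - (4Δ)^d)^n`, a point failing to be central with probability exactly `(4Δ)^d`. -/

open MeasureTheory Real

noncomputable section

/-- The uniform probability measure on the unit cube `[0,1]^d`. -/
def cubeMeasure (d : ℕ) : Measure (Fin d → ℝ) :=
  Measure.pi fun _ => volume.restrict (Set.Icc (0 : ℝ) 1)

/-- The joint law of `n` i.i.d. points, each uniform on `[0,1]^d`. -/
def sampleMeasure (d n : ℕ) : Measure (Fin n → Fin d → ℝ) :=
  Measure.pi fun _ => cubeMeasure d

/-- Euclidean distance on `Fin d → ℝ`. -/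
def eDist {d : ℕ} (x y : Fin d → ℝ) : ℝ :=
  Real.sqrt (∑ k, (x k - y k) ^ 2)

lemma eDist_comm {d : ℕ} (x y : Fin d → ℝ) : eDist x y = eDist y x := by
  unfold eDist
  congr 1
  exact Finset.sum_congr rfl fun k _ => by ring

/-- The geometric graph on the points `x 0, …, x (n-1)` with radius `r`:
distinct `i`, `j` are adjacent iff the Euclidean distance of `x i` and `x j` is at most `r`. -/
def geomGraph {d n : ℕ} (x : Fin n → Fin d → ℝ) (r : ℝ) : SimpleGraph (Fin n) where
  Adj i j := i ≠ j ∧ eDist (x i) (x j) ≤ r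
  symm := ⟨fun i j h => ⟨h.1.symm, by rw [eDist_comm]; exact h.2⟩⟩
  loopless := ⟨fun i h => h.1 rfl⟩

/-- A graph property (on labelled vertex sets `Fin m`) is closed under isomorphism. -/
def IsoClosed (A : ∀ m, SimpleGraph (Fin m) → Prop) : Prop :=
  ∀ m, ∀ G G' : SimpleGraph (Fin m), Nonempty (G ≃g G') → (A m G ↔ A m G')

/-- A graph property is increasing: preserved by adding edges. -/
def IncreasingProp (A : ∀ m, SimpleGraph (Fin m) → Prop) : Prop :=
  ∀ m, ∀ G G' : SimpleGraph (Fin m), G ≤ G' → A m G → A m G'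

/-- The probability that a random geometric graph on `n` uniform points in `[0,1]^d`
with radius `r` satisfies the property `A`. -/
def geomProb (d n : ℕ) (A : ∀ m, SimpleGraph (Fin m) → Prop) (r : ℝ) : ENNReal :=
  sampleMeasure d n {x | A n (geomGraph x r)}

/-- Threshold radius `r_A(n, ε)`. -/
def thresholdRadius (d n : ℕ) (A : ∀ m, SimpleGraph (Fin m) → Prop) (ε : ℝ) : ℝ :=
  sInf {r : ℝ | 0 < r ∧ ENNReal.ofReal ε ≤ geomProb d n A r}

/-- Threshold width `δ_A(n, ε) = r_A(n, 1-ε) - r_A(n, ε)`. -/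
def thresholdWidth (d n : ℕ) (A : ∀ m, SimpleGraph (Fin m) → Prop) (ε : ℝ) : ℝ :=
  thresholdRadius d n A (1 - ε) - thresholdRadius d n A ε

/-- The bottleneck matching weight between the point sets `x` and `y`. -/
def bottleneck {d n : ℕ} (x y : Fin n → Fin d → ℝ) : ℝ :=
  ⨅ φ : Equiv.Perm (Fin n), ⨆ i, eDist (x i) (y (φ i))

/-- The joint law of two independent samples of `n` uniform points in `[0,1]^d`. -/
def pairMeasure (d n : ℕ) : Measure ((Fin n → Fin d → ℝ) × (Fin n → Fin d → ℝ)) :=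
  (sampleMeasure d n).prod (sampleMeasure d n)

/-- `G` is isomorphic to a subgraph of `G'`. -/
def IsSubgraphIso {n m : ℕ} (G : SimpleGraph (Fin n)) (G' : SimpleGraph (Fin m)) : Prop :=
  ∃ f : Fin n ↪ Fin m, ∀ i j, G.Adj i j → G'.Adj (f i) (f j)

/-- The property: every vertex has degree at least a quarter of the number of vertices. -/
def minDegProp : ∀ m, SimpleGraph (Fin m) → Prop :=
  fun m G => ∀ v, (m : ℝ) / 4 ≤ ((G.neighborSet v).ncard : ℝ)

/-- The property of being a complete graph. -/
def completeProp : ∀ m, SimpleGraph (Fin m) → Prop :=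
  fun m G => ∀ i j : Fin m, i ≠ j → G.Adj i j

open Set

def centralPoints (d : ℕ) (a : ℝ) : Set (Fin d → ℝ) :=
  {p | (∀ k, p k ∈ Icc 0 1) ∧ ∃ k, p k ∈ Icc a (1 - a)}

instance (d : ℕ) : IsProbabilityMeasure (cubeMeasure d) := by
  have : IsProbabilityMeasure (volume.restrict (Icc (0 : ℝ) 1)) := ⟨by simp⟩
  unfold cubeMeasure
  infer_instance

theorem centralPoints_eq_pi_diff_pi (d : ℕ) (a : ℝ) :
    centralPoints d a =
      pi univ (fun _ => Icc 0 1) \ pi univ (fun _ => Icc 0 1 \ Icc a (1 - a)) := by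
  ext p
  simp only [centralPoints, mem_ofPred_eq, mem_sdiff, mem_pi, mem_univ, forall_const]
  constructor
  · rintro ⟨hp, k, hk⟩
    exact ⟨hp, fun h => (h k).2 hk⟩
  · rintro ⟨hp, hnot⟩
    obtain ⟨k, hk⟩ := not_forall.1 hnot
    exact ⟨hp, k, not_not.1 fun h => hk ⟨hp k, h⟩⟩

theorem volume_restrict_Icc_diff_Icc {a : ℝ} (ha0 : 0 ≤ a) (ha1 : 2 * a ≤ 1) :
    volume.restrict (Icc (0 : ℝ) 1) (Icc 0 1 \ Icc a (1 - a)) = ENNReal.ofReal (2 * a) := by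
  rw [Measure.restrict_eq_self _ sdiff_subset,
    measure_sdiff (Icc_subset_Icc ha0 (by linarith)) measurableSet_Icc.nullMeasurableSet
      measure_Icc_lt_top.ne,
    Real.volume_Icc, Real.volume_Icc, ← ENNReal.ofReal_sub _ (by linarith)]
  ring_nf

theorem cubeMeasure_centralPoints {d : ℕ} {a : ℝ} (ha0 : 0 ≤ a) (ha1 : 2 * a ≤ 1) :
    cubeMeasure d (centralPoints d a) = ENNReal.ofReal (1 - (2 * a) ^ d) := by
  have hcube : cubeMeasure d (pi univ fun _ => Icc 0 1) = 1 := by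
    rw [cubeMeasure, Measure.pi_pi]
    simp
  have hcorner : cubeMeasure d (pi univ fun _ => Icc 0 1 \ Icc a (1 - a)) =
      ENNReal.ofReal ((2 * a) ^ d) := by
    simp [cubeMeasure, Measure.pi_pi, volume_restrict_Icc_diff_Icc ha0 ha1,
      ENNReal.ofReal_pow (by linarith : (0 : ℝ) ≤ 2 * a)]
  rw [centralPoints_eq_pi_diff_pi,
    measure_sdiff (pi_mono fun _ _ => sdiff_subset)
      (MeasurableSet.univ_pi fun _ => measurableSet_Icc.diff measurableSet_Icc).nullMeasurableSet
      (by simp [hcorner]),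
    hcube, hcorner, ENNReal.ofReal_sub _ (by positivity), ENNReal.ofReal_one]

theorem sum_sq_sub_le_of_mem_centralPoints {d : ℕ} {a : ℝ} {x y : Fin d → ℝ}
    (hx : x ∈ centralPoints d a) (hy : y ∈ centralPoints d a) :
    ∑ k, (x k - y k) ^ 2 ≤ d - 1 + (1 - 2 * a) ^ 2 := by
  obtain ⟨hx01, i, hi⟩ := hx
  obtain ⟨hy01, j, hj⟩ := hy
  set g : Fin d → ℝ := fun k => 1 - (x k - y k) ^ 2
  have hg : ∀ k, 0 ≤ g k := fun k => by
    nlinarith [(hx01 k).1, (hx01 k).2, (hy01 k).1, (hy01 k).2]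
  have hslack : 1 - (1 - 2 * a) ^ 2 ≤ ∑ k, g k := by
    rcases eq_or_ne i j with rfl | hij
    · calc 1 - (1 - 2 * a) ^ 2 ≤ g i := by nlinarith [hi.1, hi.2, hj.1, hj.2]
        _ ≤ ∑ k, g k := Finset.single_le_sum (fun k _ => hg k) (Finset.mem_univ i)
    · have hgi : 1 - (1 - a) ^ 2 ≤ g i := by nlinarith [hi.1, hi.2, (hy01 i).1, (hy01 i).2]
      have hgj : 1 - (1 - a) ^ 2 ≤ g j := by nlinarith [hj.1, hj.2, (hx01 j).1, (hx01 j).2]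
      calc 1 - (1 - 2 * a) ^ 2 ≤ g i + g j := by nlinarith [sq_nonneg a]
        _ = ∑ k ∈ {i, j}, g k := (Finset.sum_pair hij).symm
        _ ≤ ∑ k, g k := Finset.sum_le_univ_sum_of_nonneg hg
  have hsum : ∑ k, g k = d - ∑ k, (x k - y k) ^ 2 := by
    simp [g, Finset.sum_sub_distrib]
  linarith

theorem completeProp_geomGraph {d n : ℕ} {a : ℝ} {x : Fin n → Fin d → ℝ}
    (hx : ∀ i, x i ∈ centralPoints d a) :
    completeProp n (geomGraph x (√(d - 1 + (1 - 2 * a) ^ 2))) := fun i j hij =>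
  ⟨hij, Real.sqrt_le_sqrt (sum_sq_sub_le_of_mem_centralPoints (hx i) (hx j))⟩

theorem stmt18_general (d n : ℕ) (Δ : ℝ) (h0 : 0 < Δ) (h1 : Δ < 1 / 4)
    (h2 : (4 * Δ) ^ d < 1) :
    ENNReal.ofReal ((1 - (4 * Δ) ^ d) ^ n) ≤
      sampleMeasure d n
        {x | completeProp n (geomGraph x (Real.sqrt ((d : ℝ) - 1 + (1 - 4 * Δ) ^ 2)))} := by
  have h4Δ : 4 * Δ = 2 * (2 * Δ) := by ring
  calc ENNReal.ofReal ((1 - (4 * Δ) ^ d) ^ n)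
      = cubeMeasure d (centralPoints d (2 * Δ)) ^ n := by
        rw [cubeMeasure_centralPoints (by linarith) (by linarith), ← h4Δ,
          ENNReal.ofReal_pow (sub_nonneg.2 h2.le)]
    _ = sampleMeasure d n (pi univ fun _ => centralPoints d (2 * Δ)) := by
        simp [sampleMeasure, Measure.pi_pi]
    _ ≤ _ := measure_mono fun x hx => by
        rw [h4Δ]
        exact completeProp_geomGraph fun i => hx i (mem_univ i)

/-- for radius `l = √(d - 1 + (1 - 4Δ)²)`, the random geometric graph is
complete with probability at least `(1 - (4Δ)^d)^n`. -/
theorem stmt18 (d n : ℕ) (hd : 1 ≤ d) (hn : 1 ≤ n) (Δ : ℝ) (h0 : 0 < Δ) (h1 : Δ < 1 / 4)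
    (h2 : (4 * Δ) ^ d < 1) :
    ENNReal.ofReal ((1 - (4 * Δ) ^ d) ^ n) ≤
      sampleMeasure d n
        {x | completeProp n (geomGraph x (Real.sqrt ((d : ℝ) - 1 + (1 - 4 * Δ) ^ 2)))} :=
  stmt18_general d n Δ h0 h1 h2

end
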